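/- arXiv:0909.2353 — 3 statements merged into one kernel-verified Lean document; each statement's English description precedes it below -/
import Mathlib

section
/- Let S ⊂ [0,1]^D satisfy κ^{-1}ε^d ≤ vol_d(B(x,ε) ∩ S) ≤ κ ε^d for all x ∈ S and ε ∈ [0, diam S], with κ ≥ 1 and 1 ≤ d ≤ D. For τ > 0, let B(S,τ) = {x ∈ [0,1]^D : dist(x, S) ≤ τ}. Then for every x ∈ B(S,τ) and every ε with 2τ ≤ ε ≤ diam(S), there exist constants c, C > 0 depending only on κ, d, D such that c · ε^d τ^{D−d} ≤ vol_D(B(S,τ) ∩ B(x,ε)) ≤ C · ε^d τ^{D−d}. -/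
/-!
Pack `S` near `x` by a maximal family of disjoint balls of radius comparable to `τ`, whose
fourfold enlargements cover (Vitali). Ahlfors regularity of `S` pins the number of packing
balls to `(ε / τ) ^ d` up to constants. The `τ`-neighbourhood of `S` near `x` is covered by
boundedly enlarged packing balls, each of volume `≍ τ ^ D`, which gives the upper bound. For the
lower bound, each packing point carries the copy of the cube scaled about it by `τ / (4 √D)`:
by convexity it stays in the cube, it lies in the neighbourhood, and these copies are disjoint.
-/

open MeasureTheory Metric Set Module
open scoped ENNReal

lemma ENNReal.ofReal_div_le_of_le_mul {n : ℝ≥0∞} {a b : ℝ} (ha : 0 < a)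
    (h : ENNReal.ofReal b ≤ n * ENNReal.ofReal a) : ENNReal.ofReal (b / a) ≤ n := by
  rw [ENNReal.ofReal_div_of_pos ha]
  exact ENNReal.div_le_of_le_mul h

lemma ENNReal.le_ofReal_div_of_mul_le {n : ℝ≥0∞} {a b : ℝ} (ha : 0 < a)
    (h : n * ENNReal.ofReal a ≤ ENNReal.ofReal b) : n ≤ ENNReal.ofReal (b / a) := by
  rw [ENNReal.ofReal_div_of_pos ha]
  exact (ENNReal.le_div_iff_mul_le (.inl (by simpa using ha)) (.inl ENNReal.ofReal_ne_top)).2 h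

lemma Metric.mem_cthickening_iff_infDist_le {X : Type*} [PseudoMetricSpace X] {S : Set X}
    (hS : S.Nonempty) {τ : ℝ} (hτ : 0 ≤ τ) {w : X} : w ∈ cthickening τ S ↔ infDist w S ≤ τ :=
  mem_cthickening_iff.trans (ENNReal.le_ofReal_iff_toReal_le (infEDist_ne_top hS) hτ)

section Counting

variable {X ι : Type*} [MeasurableSpace X] {ν : Measure X} {t : Set ι}

lemma measure_le_encard_mul_of_subset_biUnion (ht : t.Countable) {A : Set X} {B : ι → Set X}
    (hA : A ⊆ ⋃ i ∈ t, B i) {M : ℝ≥0∞} (hM : ∀ i ∈ t, ν (B i) ≤ M) : ν A ≤ t.encard * M :=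
  calc ν A ≤ ν (⋃ i ∈ t, B i) := measure_mono hA
    _ ≤ ∑' i : t, ν (B i) := measure_biUnion_le ν ht B
    _ ≤ ∑' _ : t, M := ENNReal.tsum_le_tsum fun i => hM i i.2
    _ = t.encard * M := ENNReal.tsum_set_const t M

lemma encard_mul_le_measure_of_pairwiseDisjoint (ht : t.Countable) {B : ι → Set X}
    (hB : ∀ i ∈ t, MeasurableSet (B i)) (hdisj : t.PairwiseDisjoint B) {T : Set X}
    (hT : ∀ i ∈ t, B i ⊆ T) {m : ℝ≥0∞} (hm : ∀ i ∈ t, m ≤ ν (B i)) : t.encard * m ≤ ν T :=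
  calc t.encard * m = ∑' _ : t, m := (ENNReal.tsum_set_const t m).symm
    _ ≤ ∑' i : t, ν (B i) := ENNReal.tsum_le_tsum fun i => hm i i.2
    _ = ν (⋃ i ∈ t, B i) := (measure_biUnion ht hdisj hB).symm
    _ ≤ ν T := measure_mono (iUnion₂_subset hT)

end Counting

lemma exists_countable_pairwiseDisjoint_closedBall_cover {X : Type*} [PseudoMetricSpace X]
    [TopologicalSpace.SeparableSpace X] (A : Set X) {r : ℝ} (hr : 0 < r) :
    ∃ t ⊆ A, t.Countable ∧ t.PairwiseDisjoint (closedBall · r) ∧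
      A ⊆ ⋃ b ∈ t, closedBall b (4 * r) := by
  obtain ⟨t, htA, hdisj, hcov⟩ := Vitali.exists_disjoint_subfamily_covering_enlargement_closedBall
    A id (fun _ => r) r (fun _ _ => le_rfl) 4 (by norm_num)
  refine ⟨t, htA, hdisj.countable_of_nonempty_interior fun b _ =>
    ⟨b, ball_subset_interior_closedBall (mem_ball_self hr)⟩, hdisj, fun a ha => ?_⟩
  obtain ⟨b, hb, hab⟩ := hcov a ha
  exact mem_biUnion hb (hab (mem_closedBall_self hr.le))

lemma Convex.image_homothety_subset_inter_closedBall {E : Type*} [NormedAddCommGroup E]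
    [NormedSpace ℝ E] {Q : Set E} (hQ : Convex ℝ Q) (hQb : Bornology.IsBounded Q) {b : E}
    (hb : b ∈ Q) {s : ℝ} (hs : s ∈ Icc 0 1) :
    AffineMap.homothety b s '' Q ⊆ Q ∩ closedBall b (s * diam Q) := by
  rintro _ ⟨y, hy, rfl⟩
  refine ⟨AffineMap.homothety_eq_lineMap b s y ▸ hQ.lineMap_mem hb hy hs, ?_⟩
  rw [mem_closedBall, dist_homothety_center, Real.norm_of_nonneg hs.1]
  exact mul_le_mul_of_nonneg_left (dist_le_diam_of_mem hQb hb hy) hs.1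

section AhlforsRegular

variable {X : Type*} [PseudoMetricSpace X] [MeasurableSpace X]

def IsAhlforsRegular (ν : Measure X) (S : Set X) (d : ℕ) (κ : ℝ) : Prop :=
  ∀ x ∈ S, ∀ r ∈ Icc 0 (diam S), ENNReal.ofReal (κ⁻¹ * r ^ d) ≤ ν (closedBall x r ∩ S) ∧
    ν (closedBall x r ∩ S) ≤ ENNReal.ofReal (κ * r ^ d)

variable {ν : Measure X} {S : Set X} {d : ℕ} {κ : ℝ}

lemma IsAhlforsRegular.measure_closedBall_inter_le (hS : IsAhlforsRegular ν S d κ)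
    (hSb : Bornology.IsBounded S) (hκ : 0 ≤ κ) {x : X} (hx : x ∈ S) {r : ℝ} (hr : 0 ≤ r) :
    ν (closedBall x r ∩ S) ≤ ENNReal.ofReal (κ * r ^ d) := by
  rcases le_or_gt r (diam S) with hrS | hrS
  · exact (hS x hx r ⟨hr, hrS⟩).2
  have hball : closedBall x r ∩ S = closedBall x (diam S) ∩ S := by
    refine Subset.antisymm (fun z hz => ⟨?_, hz.2⟩)
      (inter_subset_inter_left S (closedBall_subset_closedBall hrS.le))
    exact mem_closedBall.2 (dist_le_diam_of_mem hSb hz.2 hx)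
  calc ν (closedBall x r ∩ S) = ν (closedBall x (diam S) ∩ S) := by rw [hball]
    _ ≤ ENNReal.ofReal (κ * diam S ^ d) := (hS x hx _ ⟨diam_nonneg, le_rfl⟩).2
    _ ≤ ENNReal.ofReal (κ * r ^ d) := by gcongr

lemma IsAhlforsRegular.ofReal_le_encard_mul_of_subset_biUnion (hS : IsAhlforsRegular ν S d κ)
    {t : Set X} (htc : t.Countable) (htS : t ⊆ S) {y : X} (hy : y ∈ S) {ρ r : ℝ}
    (hρ : ρ ∈ Icc 0 (diam S)) (hr : r ∈ Icc 0 (diam S))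
    (hcov : S ∩ closedBall y ρ ⊆ ⋃ b ∈ t, closedBall b r) :
    ENNReal.ofReal (κ⁻¹ * ρ ^ d) ≤ t.encard * ENNReal.ofReal (κ * r ^ d) := by
  refine (hS y hy ρ hρ).1.trans (measure_le_encard_mul_of_subset_biUnion htc
    (B := fun b => closedBall b r ∩ S) (fun z hz => ?_) fun b hb => (hS b (htS hb) r hr).2)
  obtain ⟨b, hb, hzb⟩ := mem_iUnion₂.1 (hcov ⟨hz.2, hz.1⟩)
  exact mem_biUnion hb ⟨hzb, hz.2⟩

lemma IsAhlforsRegular.encard_mul_le_ofReal_of_pairwiseDisjoint [OpensMeasurableSpace X]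
    (hS : IsAhlforsRegular ν S d κ) (hSb : Bornology.IsBounded S) (hκ : 0 ≤ κ) {t : Set X}
    (htc : t.Countable) (htS : t ⊆ S) {r : ℝ} (hr : r ∈ Icc 0 (diam S))
    (hdisj : t.PairwiseDisjoint (closedBall · r)) {y : X} (hy : y ∈ S) {ρ : ℝ} (hρ : 0 ≤ ρ)
    (hsub : ∀ b ∈ t, closedBall b r ⊆ closedBall y ρ) :
    t.encard * ENNReal.ofReal (κ⁻¹ * r ^ d) ≤ ENNReal.ofReal (κ * ρ ^ d) := by
  have hrestrict : ∀ z r, ν.restrict S (closedBall z r) = ν (closedBall z r ∩ S) :=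
    fun z r => Measure.restrict_apply measurableSet_closedBall
  calc t.encard * ENNReal.ofReal (κ⁻¹ * r ^ d) ≤ ν.restrict S (closedBall y ρ) :=
        encard_mul_le_measure_of_pairwiseDisjoint htc (fun _ _ => measurableSet_closedBall) hdisj
          hsub fun b hb => (hrestrict b r).symm ▸ (hS b (htS hb) r hr).1
    _ ≤ ENNReal.ofReal (κ * ρ ^ d) :=
        (hrestrict y ρ).symm ▸ hS.measure_closedBall_inter_le hSb hκ hy hρ

end AhlforsRegular

namespace IsAhlforsRegular

variable {E : Type*} [NormedAddCommGroup E] [NormedSpace ℝ E] [FiniteDimensional ℝ E]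
  [MeasurableSpace E] [BorelSpace E] (μ : Measure E) [μ.IsAddHaarMeasure] {ν : Measure E}
  {S : Set E} {d : ℕ} {κ τ ε : ℝ} {x : E}

theorem le_addHaar_inter_cthickening_inter_closedBall (hS : IsAhlforsRegular ν S d κ)
    (hκ : 0 < κ) {Q : Set E} (hQ : Convex ℝ Q) (hQc : IsCompact Q) {R : ℝ} (hQR : diam Q ≤ R)
    (hSQ : S ⊆ Q) (hτ : 0 < τ) (hτε : 2 * τ ≤ ε) (hε : ε ≤ diam S) (hx : x ∈ cthickening τ S)
    (hdD : d ≤ finrank ℝ E) :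
    ENNReal.ofReal ((κ ^ 2 * 4 ^ d * (4 * R) ^ finrank ℝ E)⁻¹ * ε ^ d *
        τ ^ (finrank ℝ E - d)) * μ Q ≤ μ (Q ∩ cthickening τ S ∩ closedBall x ε) := by
  obtain ⟨y, hyS, hxy⟩ := mem_thickening_iff.1
    (cthickening_subset_thickening' (by positivity) (by linarith : τ < 5 / 4 * τ) S hx)
  have hSR : diam S ≤ R := (diam_mono hSQ hQc.isBounded).trans hQR
  have hε0 : 0 < ε := by linarith
  have hR : 0 < R := by linarith
  set s := τ / (4 * R) with hs_def
  have hs : s ∈ Icc 0 1 := ⟨by positivity, by rw [hs_def, div_le_one (by positivity)]; linarith⟩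
  have hsR : s * diam Q ≤ τ / 4 := by
    rw [hs_def, div_mul_eq_mul_div, div_le_div_iff₀ (by positivity) (by norm_num)]
    nlinarith
  obtain ⟨t, htA, htc, hdisj, hcov⟩ := exists_countable_pairwiseDisjoint_closedBall_cover
    (S ∩ closedBall y (ε / 4)) (by positivity : 0 < τ / 4)
  rw [show 4 * (τ / 4) = τ by ring] at hcov
  have hcount : ENNReal.ofReal (κ⁻¹ * (ε / 4) ^ d) ≤ t.encard * ENNReal.ofReal (κ * τ ^ d) :=
    hS.ofReal_le_encard_mul_of_subset_biUnion htc (fun b hb => (htA hb).1) hyS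
      ⟨by positivity, by linarith⟩ ⟨hτ.le, by linarith⟩ fun z hz => hcov ⟨hz.1, hz.2⟩
  set K := fun b => AffineMap.homothety b s '' Q
  have hKsub : ∀ b ∈ t, K b ⊆ Q ∩ closedBall b (τ / 4) := fun b hb =>
    (hQ.image_homothety_subset_inter_closedBall hQc.isBounded (hSQ (htA hb).1) hs).trans
      (inter_subset_inter_right Q (closedBall_subset_closedBall hsR))
  have hK : ∀ b ∈ t, K b ⊆ Q ∩ cthickening τ S ∩ closedBall x ε := by
    intro b hb w hw
    obtain ⟨hwQ, hwb⟩ := hKsub b hb hw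
    have hby := mem_closedBall.1 (htA hb).2
    rw [mem_closedBall] at hwb
    refine ⟨⟨hwQ, mem_cthickening_of_dist_le w b τ S (htA hb).1 (by linarith)⟩, ?_⟩
    rw [mem_closedBall]
    linarith [dist_triangle4 w b y x, dist_comm x y]
  have hpack : t.encard * (ENNReal.ofReal (s ^ finrank ℝ E) * μ Q) ≤
      μ (Q ∩ cthickening τ S ∩ closedBall x ε) :=
    encard_mul_le_measure_of_pairwiseDisjoint htc
      (fun b _ => (hQc.image (AffineMap.homothety_continuous b s)).isClosed.measurableSet)
      (hdisj.mono_on fun b hb => (hKsub b hb).trans inter_subset_right) hK fun b _ => by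
        rw [Measure.addHaar_image_homothety, abs_of_nonneg (pow_nonneg hs.1 _)]
  calc ENNReal.ofReal ((κ ^ 2 * 4 ^ d * (4 * R) ^ finrank ℝ E)⁻¹ * ε ^ d *
        τ ^ (finrank ℝ E - d)) * μ Q
      = ENNReal.ofReal (κ⁻¹ * (ε / 4) ^ d / (κ * τ ^ d)) *
          (ENNReal.ofReal (s ^ finrank ℝ E) * μ Q) := by
        rw [← mul_assoc, ← ENNReal.ofReal_mul (by positivity), hs_def]
        congr 2
        simp only [div_pow]
        rw [← pow_sub_mul_pow τ hdD]
        field_simp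
    _ ≤ t.encard * (ENNReal.ofReal (s ^ finrank ℝ E) * μ Q) := by
        gcongr
        exact ENNReal.ofReal_div_le_of_le_mul (by positivity) hcount
    _ ≤ _ := hpack

theorem addHaar_cthickening_inter_closedBall_le (hS : IsAhlforsRegular ν S d κ) (hκ : 0 < κ)
    (hτ : 0 < τ) (hτε : 2 * τ ≤ ε) (hε : ε ≤ diam S) (hx : x ∈ cthickening τ S)
    (hdD : d ≤ finrank ℝ E) :
    μ (cthickening τ S ∩ closedBall x ε) ≤
      ENNReal.ofReal (κ ^ 2 * 4 ^ d * 6 ^ finrank ℝ E * ε ^ d * τ ^ (finrank ℝ E - d)) *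
        μ (ball 0 1) := by
  have hSb : Bornology.IsBounded S := by
    by_contra h
    rw [diam_eq_zero_of_unbounded h] at hε
    linarith
  have hε0 : 0 < ε := by linarith
  obtain ⟨y, hyS, hxy⟩ := mem_thickening_iff.1
    (cthickening_subset_thickening' (by positivity) (by linarith : τ < 2 * τ) S hx)
  obtain ⟨t, htA, htc, hdisj, hcov⟩ :=
    exists_countable_pairwiseDisjoint_closedBall_cover (S ∩ closedBall x (ε + 2 * τ)) hτ
  have hcover : cthickening τ S ∩ closedBall x ε ⊆ ⋃ b ∈ t, closedBall b (6 * τ) := by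
    rintro w ⟨hw, hwx⟩
    obtain ⟨z, hzS, hwz⟩ := mem_thickening_iff.1
      (cthickening_subset_thickening' (by positivity) (by linarith : τ < 2 * τ) S hw)
    have hzx : z ∈ closedBall x (ε + 2 * τ) := by
      rw [mem_closedBall] at hwx ⊢
      linarith [dist_triangle z w x, dist_comm w z]
    obtain ⟨b, hb, hzb⟩ := mem_iUnion₂.1 (hcov ⟨hzS, hzx⟩)
    refine mem_biUnion hb (mem_closedBall.2 ?_)
    linarith [dist_triangle w z b, mem_closedBall.1 hzb]
  have hcount : t.encard * ENNReal.ofReal (κ⁻¹ * τ ^ d) ≤ ENNReal.ofReal (κ * (4 * ε) ^ d) := by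
    refine hS.encard_mul_le_ofReal_of_pairwiseDisjoint hSb hκ.le htc (fun b hb => (htA hb).1)
      ⟨hτ.le, by linarith⟩ hdisj hyS (by positivity) fun b hb z hz => ?_
    have hbx := mem_closedBall.1 (htA hb).2
    rw [mem_closedBall] at hz ⊢
    linarith [dist_triangle4 z b x y]
  calc μ (cthickening τ S ∩ closedBall x ε)
      ≤ t.encard * (ENNReal.ofReal ((6 * τ) ^ finrank ℝ E) * μ (ball 0 1)) :=
        measure_le_encard_mul_of_subset_biUnion htc hcover fun b _ =>
          (Measure.addHaar_closedBall μ b (by positivity)).le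
    _ ≤ ENNReal.ofReal (κ * (4 * ε) ^ d / (κ⁻¹ * τ ^ d)) *
          (ENNReal.ofReal ((6 * τ) ^ finrank ℝ E) * μ (ball 0 1)) := by
        gcongr
        exact ENNReal.le_ofReal_div_of_mul_le (by positivity) hcount
    _ = _ := by
        rw [← mul_assoc, ← ENNReal.ofReal_mul (by positivity)]
        congr 2
        rw [mul_pow, mul_pow, ← pow_sub_mul_pow τ hdD]
        field_simp

end IsAhlforsRegular

section UnitCube

def unitCube (D : ℕ) : Set (EuclideanSpace ℝ (Fin D)) := {x | ∀ i, x i ∈ Icc 0 1}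

variable (D : ℕ)

lemma dist_le_sqrt_of_mem_unitCube {x y : EuclideanSpace ℝ (Fin D)} (hx : x ∈ unitCube D)
    (hy : y ∈ unitCube D) : dist x y ≤ √D := by
  rw [EuclideanSpace.dist_eq]
  gcongr
  calc ∑ i, dist (x i) (y i) ^ 2 ≤ ∑ _i : Fin D, (1 : ℝ) :=
        Finset.sum_le_sum fun i _ =>
          pow_le_one₀ dist_nonneg (Real.dist_le_of_mem_Icc_01 (hx i) (hy i))
    _ = D := by simp

lemma diam_unitCube_le : diam (unitCube D) ≤ √D :=
  diam_le_of_forall_dist_le (Real.sqrt_nonneg _) fun _ hx _ hy =>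
    dist_le_sqrt_of_mem_unitCube D hx hy

lemma convex_unitCube : Convex ℝ (unitCube D) := by
  intro x hx y hy a b ha hb hab i
  simpa using convex_Icc (0 : ℝ) 1 (hx i) (hy i) ha hb hab

lemma isCompact_unitCube : IsCompact (unitCube D) := by
  have hclosed : IsClosed (unitCube D) := by
    simp only [unitCube, ofPred_forall]
    exact isClosed_iInter fun i => isClosed_Icc.preimage (by fun_prop)
  exact isCompact_of_isClosed_isBounded hclosed
    (isBounded_iff.2 ⟨√D, fun _ hx _ hy => dist_le_sqrt_of_mem_unitCube D hx hy⟩)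

lemma volume_unitCube : volume (unitCube D) = 1 := by
  have h : unitCube D = WithLp.ofLp ⁻¹' univ.pi fun _ => Icc (0 : ℝ) 1 := by
    ext x
    simp only [unitCube, mem_ofPred_eq, mem_preimage, mem_univ_pi]
  rw [h, (PiLp.volume_preserving_ofLp (Fin D)).measure_preimage
    (MeasurableSet.univ_pi fun _ => measurableSet_Icc).nullMeasurableSet]
  simp only [volume_pi_pi, Real.volume_Icc, sub_zero, ENNReal.ofReal_one, Finset.prod_const_one]

end UnitCube

/-- For `S ⊆ [0,1]^D` satisfying the `d`-regularity condition
(`1 ≤ d ≤ D`), with `B(S,τ)` the `τ`-neighborhood of `S` inside `[0,1]^D`, for every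
`x ∈ B(S,τ)` and every `ε` with `2τ ≤ ε ≤ diam S`, one has
`c ε^d τ^{D−d} ≤ vol_D(B(S,τ) ∩ B(x,ε)) ≤ C ε^d τ^{D−d}` for constants `c, C > 0`
depending only on `κ, d, D`. -/
theorem stmt10 (D d : ℕ) (hd1 : 1 ≤ d) (hdD : d ≤ D) (κ : ℝ) (hκ : 1 ≤ κ) :
    ∃ c C : ℝ, 0 < c ∧ 0 < C ∧
      ∀ (S : Set (EuclideanSpace ℝ (Fin D))), S.Nonempty →
        S ⊆ {x | ∀ i, x i ∈ Set.Icc (0:ℝ) 1} →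
        (∀ x ∈ S, ∀ ε ∈ Set.Icc (0:ℝ) (diam S),
          ENNReal.ofReal (κ⁻¹ * ε ^ d) ≤ μH[(d:ℝ)] (closedBall x ε ∩ S) ∧
            μH[(d:ℝ)] (closedBall x ε ∩ S) ≤ ENNReal.ofReal (κ * ε ^ d)) →
        ∀ (τ ε : ℝ), 0 < τ → 2 * τ ≤ ε → ε ≤ diam S →
        ∀ x ∈ {w : EuclideanSpace ℝ (Fin D) |
            (∀ i, w i ∈ Set.Icc (0:ℝ) 1) ∧ infDist w S ≤ τ},
          ENNReal.ofReal (c * ε ^ d * τ ^ (D - d)) ≤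
              volume ({w : EuclideanSpace ℝ (Fin D) |
                (∀ i, w i ∈ Set.Icc (0:ℝ) 1) ∧ infDist w S ≤ τ} ∩ closedBall x ε) ∧
            volume ({w : EuclideanSpace ℝ (Fin D) |
                (∀ i, w i ∈ Set.Icc (0:ℝ) 1) ∧ infDist w S ≤ τ} ∩ closedBall x ε) ≤
              ENNReal.ofReal (C * ε ^ d * τ ^ (D - d)) := by
  have hκ0 : 0 < κ := zero_lt_one.trans_le hκ
  have hD : 0 < √D := Real.sqrt_pos.2 (by exact_mod_cast hd1.trans hdD)
  have hdim : finrank ℝ (EuclideanSpace ℝ (Fin D)) = D := finrank_euclideanSpace_fin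
  set V := volume (ball (0 : EuclideanSpace ℝ (Fin D)) 1)
  have hV : V ≠ ⊤ := measure_ball_lt_top.ne
  refine ⟨(κ ^ 2 * 4 ^ d * (4 * √D) ^ D)⁻¹, κ ^ 2 * 4 ^ d * 6 ^ D * V.toReal, by positivity,
    mul_pos (by positivity) (ENNReal.toReal_pos (measure_ball_pos _ _ one_pos).ne' hV), ?_⟩
  intro S hSne hSQ hS τ ε hτ hτε hε x hx
  have hε0 : 0 < ε := by linarith
  have hreg : IsAhlforsRegular μH[(d:ℝ)] S d κ := hS
  have hset : {w : EuclideanSpace ℝ (Fin D) | (∀ i, w i ∈ Set.Icc (0:ℝ) 1) ∧ infDist w S ≤ τ} =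
      unitCube D ∩ cthickening τ S := by
    ext w
    rw [mem_inter_iff, mem_cthickening_iff_infDist_le hSne hτ.le]
    rfl
  rw [hset] at hx ⊢
  constructor
  · simpa only [hdim, volume_unitCube, mul_one] using
      hreg.le_addHaar_inter_cthickening_inter_closedBall volume hκ0 (convex_unitCube D)
        (isCompact_unitCube D) (diam_unitCube_le D) hSQ hτ hτε hε hx.2 (hdim.symm ▸ hdD)
  · calc volume (unitCube D ∩ cthickening τ S ∩ closedBall x ε)
        ≤ volume (cthickening τ S ∩ closedBall x ε) := by gcongr; exact inter_subset_right
      _ ≤ ENNReal.ofReal (κ ^ 2 * 4 ^ d * 6 ^ D * ε ^ d * τ ^ (D - d)) * V := by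
        simpa only [hdim] using hreg.addHaar_cthickening_inter_closedBall_le volume hκ0 hτ hτε hε
          hx.2 (hdim.symm ▸ hdD)
      _ = ENNReal.ofReal (κ ^ 2 * 4 ^ d * 6 ^ D * V.toReal * ε ^ d * τ ^ (D - d)) := by
        rw [mul_right_comm _ V.toReal, mul_right_comm _ V.toReal,
          ENNReal.ofReal_mul' ENNReal.toReal_nonneg, ENNReal.ofReal_toReal hV]
end

section
/- Let x_1,…,x_N ∈ ℝ^D be points grouped into clusters X_1,…,X_K such that ‖x_i − x_j‖ > ε whenever x_i and x_j lie in different clusters, and let the affinity graph connect i and j iff ‖x_i − x_j‖ ≤ ε. Suppose y_1,…,y_n ∈ ℝ^D are such that (i) every y_j-ball B(y_j, ε/5) contains at least one data point of cluster X_k, (ii) the union ∪_j B(y_j, ε/5) covers a connected set S containing all y_j, and (iii) every data point of X_k lies in some B(y_j, ε/5). Then the points of cluster X_k form a connected subgraph of the affinity graph. -/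
open Metric

lemma path_of_rtg {N : ℕ} {X : Type*} [PseudoMetricSpace X] (x : Fin N → X) (ε : ℝ)
    (P : Fin N → Prop) {i i' : Fin N} (hi : P i)
    (h : Relation.ReflTransGen
      (fun a b => P a ∧ P b ∧ dist (x a) (x b) ≤ ε) i i') :
    ∃ (L : ℕ) (w : Fin (L + 1) → Fin N),
      w 0 = i ∧ w (Fin.last L) = i' ∧ (∀ t, P (w t)) ∧
      ∀ t : Fin L, dist (x (w t.castSucc)) (x (w t.succ)) ≤ ε := by
  induction h with
  | refl =>
    exact ⟨0, fun _ => i, rfl, rfl, fun _ => hi, fun t => t.elim0⟩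
  | @tail b e hab step ih =>
    obtain ⟨L, w, hw0, hwl, hP, hstep⟩ := ih
    refine ⟨L + 1, Fin.snoc w e, ?_, ?_, ?_, ?_⟩
    · rw [show (0 : Fin (L+2)) = Fin.castSucc 0 by rfl, Fin.snoc_castSucc]; exact hw0
    · simp [Fin.snoc_last]
    · intro t
      induction t using Fin.lastCases with
      | last => simpa using step.2.1
      | cast j => rw [Fin.snoc_castSucc]; exact hP j
    · intro t
      induction t using Fin.lastCases with
      | last =>
        rw [Fin.snoc_castSucc, Fin.succ_last, Fin.snoc_last, hwl]
        exact step.2.2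
      | cast j =>
        rw [show (Fin.castSucc j).castSucc = Fin.castSucc j.castSucc from rfl,
          Fin.snoc_castSucc, Fin.succ_castSucc, Fin.snoc_castSucc]
        exact hstep j

/-- Data points in `ℝ^D` grouped into clusters so that points in different
clusters are more than `ε` apart; the affinity graph joins points at distance `≤ ε`.
If balls `B(y_j, ε/5)` each contain some point of cluster `k`, their union covers a
connected set `S` containing all `y_j`, and every point of cluster `k` lies in some
`B(y_j, ε/5)`, then any two points of cluster `k` are joined by a path within cluster `k`
whose consecutive points are at distance `≤ ε`. -/
theorem stmt12 (D N K : ℕ) (ε : ℝ) (hε : 0 < ε)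
    (x : Fin N → EuclideanSpace ℝ (Fin D)) (c : Fin N → Fin K)
    (hsep : ∀ i j, c i ≠ c j → ε < dist (x i) (x j))
    (k : Fin K) (n : ℕ) (y : Fin n → EuclideanSpace ℝ (Fin D))
    (S : Set (EuclideanSpace ℝ (Fin D))) (hScon : IsConnected S)
    (hyS : ∀ j, y j ∈ S) (hcover : S ⊆ ⋃ j, ball (y j) (ε / 5))
    (hfill : ∀ j, ∃ i, c i = k ∧ dist (x i) (y j) ≤ ε / 5)
    (hin : ∀ i, c i = k → ∃ j, dist (x i) (y j) ≤ ε / 5) :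
    ∀ i i', c i = k → c i' = k →
      ∃ (L : ℕ) (w : Fin (L + 1) → Fin N),
        w 0 = i ∧ w (Fin.last L) = i' ∧ (∀ t, c (w t) = k) ∧
        ∀ t : Fin L, dist (x (w t.castSucc)) (x (w t.succ)) ≤ ε := by
  intro i i' hi hi'
  set Adj : Fin N → Fin N → Prop :=
    fun a b => c a = k ∧ c b = k ∧ dist (x a) (x b) ≤ ε with hAdj
  -- choose representatives
  choose p hpk hpd using hfill
  -- key connectivity claim
  have key : ∀ j j' : Fin n, Relation.ReflTransGen Adj (p j) (p j') := by
    intro j0 j1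
    by_contra hcontra
    set G : Set (Fin n) := {j | Relation.ReflTransGen Adj (p j0) (p j)} with hG
    have hj0G : j0 ∈ G := Relation.ReflTransGen.refl
    have hj1G : j1 ∉ G := hcontra
    set U : Set (EuclideanSpace ℝ (Fin D)) := ⋃ j ∈ G, ball (y j) (ε / 5)
    set V : Set (EuclideanSpace ℝ (Fin D)) := ⋃ j ∈ Gᶜ, ball (y j) (ε / 5)
    have hUo : IsOpen U := isOpen_biUnion fun _ _ => isOpen_ball
    have hVo : IsOpen V := isOpen_biUnion fun _ _ => isOpen_ball
    have hcov : S ⊆ U ∪ V := by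
      intro z hz
      obtain ⟨_, ⟨j, rfl⟩, hzj⟩ := hcover hz
      by_cases hj : j ∈ G
      · exact Or.inl (Set.mem_biUnion hj hzj)
      · exact Or.inr (Set.mem_biUnion hj hzj)
    have hball : ∀ j : Fin n, y j ∈ ball (y j) (ε / 5) :=
      fun j => mem_ball_self (by linarith)
    have hSU : (S ∩ U).Nonempty := ⟨y j0, hyS j0, Set.mem_biUnion hj0G (hball j0)⟩
    have hSV : (S ∩ V).Nonempty := ⟨y j1, hyS j1, Set.mem_biUnion hj1G (hball j1)⟩
    obtain ⟨z, _, hzU, hzV⟩ := hScon.isPreconnected U V hUo hVo hcov hSU hSV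
    obtain ⟨_, ⟨a, rfl⟩, _, ⟨haG, rfl⟩, hza⟩ := hzU
    obtain ⟨_, ⟨b, rfl⟩, _, ⟨hbG, rfl⟩, hzb⟩ := hzV
    apply hbG
    have hyab : dist (y a) (y b) < 2 * (ε / 5) := by
      have := dist_triangle (y a) z (y b)
      rw [dist_comm (y a) z] at this
      calc dist (y a) (y b) ≤ dist z (y a) + dist z (y b) := by
            rw [dist_comm z (y a)]; exact dist_triangle _ _ _
        _ < 2 * (ε / 5) := by
            have h1 := mem_ball.mp hza
            have h2 := mem_ball.mp hzb
            linarith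
    have hadj : Adj (p a) (p b) := by
      refine ⟨hpk a, hpk b, ?_⟩
      calc dist (x (p a)) (x (p b))
          ≤ dist (x (p a)) (y a) + dist (y a) (y b) + dist (y b) (x (p b)) :=
            dist_triangle4 _ _ _ _
        _ ≤ ε / 5 + 2 * (ε / 5) + ε / 5 := by
            have := hpd a
            have := hpd b
            rw [dist_comm (y b)]
            linarith
        _ ≤ ε := by linarith
    exact haG.tail hadj
  -- assemble path
  obtain ⟨j, hj⟩ := hin i hi
  obtain ⟨j', hj'⟩ := hin i' hi'
  have h1 : Adj i (p j) := ⟨hi, hpk j, by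
    calc dist (x i) (x (p j)) ≤ dist (x i) (y j) + dist (y j) (x (p j)) :=
          dist_triangle _ _ _
      _ ≤ ε / 5 + ε / 5 := by have := hpd j; rw [dist_comm (y j)]; linarith
      _ ≤ ε := by linarith⟩
  have h2 : Adj (p j') i' := ⟨hpk j', hi', by
    calc dist (x (p j')) (x i') ≤ dist (x (p j')) (y j') + dist (y j') (x i') :=
          dist_triangle _ _ _
      _ ≤ ε / 5 + ε / 5 := by have := hpd j'; rw [dist_comm (y j')]; linarith
      _ ≤ ε := by linarith⟩
  have hrtg : Relation.ReflTransGen Adj i i' :=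
    ((Relation.ReflTransGen.single h1).trans (key j j')).tail h2
  exact path_of_rtg x ε (fun a => c a = k) hi hrtg
end

section
/- Let W and W̊ be N×N symmetric nonnegative matrices where W̊ is the block-diagonal part of W with respect to a partition I_1,…,I_K of {1,…,N}, and assume all within-block row sums D̊_i = ∑_{j ∈ I_k} W_{ij} (for i ∈ I_k) are positive. Let D_i = ∑_j W_{ij}, Z_{ij} = W_{ij}/√(D_i D_j), Z̊_{ij} = W_{ij}/√(D̊_i D̊_j) for i,j in the same block and 0 otherwise. Suppose (A2): for each k ≠ ℓ, ∑_{i∈I_k}∑_{j∈I_ℓ} W_{ij}²/(D̊_i D̊_j) ≤ ν_1, and (A3): for each k and each i ∈ I_k, (1/D̊_i)∑_{j∉I_k} W_{ij} ≤ ν_2 · C_k^{−1/2} where C_k = ∑_{s,t ∈ I_k} W_{st}²/(D̊_s D̊_t). Then ‖Z − Z̊‖_F ≤ √(K² ν_1 + K ν_2²). -/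
open Finset

lemma aux_within (a b A B ε w : ℝ) (ha : 0 < a) (hb : 0 < b) (hw : 0 ≤ w)
    (hε : 0 ≤ ε) (hA : a ≤ A) (hB : b ≤ B)
    (hA' : A ≤ (1 + ε) * a) (hB' : B ≤ (1 + ε) * b) :
    (w / Real.sqrt (A * B) - w / Real.sqrt (a * b)) ^ 2 ≤ ε ^ 2 * (w ^ 2 / (a * b)) := by
  have hApos : 0 < A := lt_of_lt_of_le ha hA
  have hBpos : 0 < B := lt_of_lt_of_le hb hB
  have hab : 0 < a * b := mul_pos ha hb
  have hsapos : 0 < Real.sqrt (a * b) := Real.sqrt_pos.mpr hab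
  have hsApos : 0 < Real.sqrt (A * B) := Real.sqrt_pos.mpr (mul_pos hApos hBpos)
  set sa := Real.sqrt (a * b) with hsa
  set sA := Real.sqrt (A * B) with hsA
  have h1 : sa ≤ sA := Real.sqrt_le_sqrt (by nlinarith)
  have h2 : sA ≤ (1 + ε) * sa := by
    have h := Real.sqrt_le_sqrt (show A * B ≤ ((1 + ε) * (1 + ε)) * (a * b) by nlinarith)
    rwa [Real.sqrt_mul (by positivity : (0:ℝ) ≤ (1 + ε) * (1 + ε)),
      Real.sqrt_mul_self (by positivity : (0:ℝ) ≤ 1 + ε)] at h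
  have h4 : 1 / sa - 1 / sA ≤ ε / sa := by
    rw [div_sub_div _ _ hsapos.ne' hsApos.ne', div_le_div_iff₀ (mul_pos hsapos hsApos) hsapos]
    nlinarith [mul_le_mul_of_nonneg_right (show sA - sa ≤ ε * sa by linarith) hsapos.le,
      mul_nonneg (mul_nonneg hε hsapos.le) (sub_nonneg.mpr h1)]
  have h5 : 0 ≤ w / sa - w / sA := by
    have : w / sA ≤ w / sa := by gcongr
    linarith
  have h6 : w / sa - w / sA ≤ ε * w / sa := by
    have h := mul_le_mul_of_nonneg_left h4 hw
    calc w / sa - w / sA = w * (1 / sa - 1 / sA) := by ring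
      _ ≤ w * (ε / sa) := h
      _ = ε * w / sa := by ring
  have h7 : (w / sA - w / sa) ^ 2 ≤ (ε * w / sa) ^ 2 := by
    have h := pow_le_pow_left₀ h5 h6 2
    calc (w / sA - w / sa) ^ 2 = (w / sa - w / sA) ^ 2 := by ring
      _ ≤ _ := h
  calc (w / sA - w / sa) ^ 2 ≤ (ε * w / sa) ^ 2 := h7
    _ = ε ^ 2 * (w ^ 2 / (a * b)) := by
        rw [hsa, div_pow, mul_pow, Real.sq_sqrt hab.le]
        ring

/-- Let `W` be a symmetric nonnegative `N×N` matrix, `I_1,…,I_K` a partition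
of the indices (given by a block assignment `c`), `D̊_i` the within-block row sums
(positive), `D_i` the full row sums, `Z_{ij} = W_{ij}/√(D_i D_j)`, and `Z̊` the
block-normalized block-diagonal part. Under (A2) and (A3),
`‖Z − Z̊‖_F ≤ √(K² ν₁ + K ν₂²)`. -/
theorem stmt14 (N K : ℕ) (c : Fin N → Fin K)
    (W : Matrix (Fin N) (Fin N) ℝ) (hsym : W.IsSymm) (hnn : ∀ i j, 0 ≤ W i j)
    (ν₁ ν₂ : ℝ)
    (Dr : Fin N → ℝ) (hDr : ∀ i, Dr i = ∑ j, W i j)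
    (Db : Fin N → ℝ)
    (hDb : ∀ i, Db i = ∑ j ∈ univ.filter (fun j => c j = c i), W i j)
    (hDbpos : ∀ i, 0 < Db i)
    (Ck : Fin K → ℝ)
    (hCk : ∀ k, Ck k = ∑ s ∈ univ.filter (fun s => c s = k),
        ∑ t ∈ univ.filter (fun t => c t = k), W s t ^ 2 / (Db s * Db t))
    (hA2 : ∀ k l : Fin K, k ≠ l →
      (∑ i ∈ univ.filter (fun i => c i = k), ∑ j ∈ univ.filter (fun j => c j = l),
          W i j ^ 2 / (Db i * Db j)) ≤ ν₁)
    (hA3 : ∀ i, (Db i)⁻¹ * (∑ j ∈ univ.filter (fun j => c j ≠ c i), W i j) ≤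
        ν₂ * (Real.sqrt (Ck (c i)))⁻¹) :
    Real.sqrt (∑ i, ∑ j,
        (W i j / Real.sqrt (Dr i * Dr j) -
          (if c i = c j then W i j / Real.sqrt (Db i * Db j) else 0)) ^ 2) ≤
      Real.sqrt ((K : ℝ) ^ 2 * ν₁ + (K : ℝ) * ν₂ ^ 2) := by
  by_cases hK : K ≤ 1
  · haveI : Subsingleton (Fin K) := by
      rcases Nat.le_one_iff_eq_zero_or_eq_one.mp hK with h | h <;> subst h <;> infer_instance
    have hDrDb : ∀ i, Dr i = Db i := by
      intro i
      rw [hDr, hDb, Finset.filter_true_of_mem (fun j _ => Subsingleton.elim (c j) (c i))]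
    have hzero : (∑ i, ∑ j,
        (W i j / Real.sqrt (Dr i * Dr j) -
          (if c i = c j then W i j / Real.sqrt (Db i * Db j) else 0)) ^ 2) = 0 := by
      apply Finset.sum_eq_zero; intro i _
      apply Finset.sum_eq_zero; intro j _
      rw [if_pos (Subsingleton.elim _ _), hDrDb i, hDrDb j, sub_self]
      norm_num
    rw [hzero, Real.sqrt_zero]
    exact Real.sqrt_nonneg _
  · push_neg at hK
    simp only [ne_eq] at hA3
    have hν₁ : 0 ≤ ν₁ := by
      have h01 : (⟨0, by omega⟩ : Fin K) ≠ ⟨1, by omega⟩ := by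
        intro h
        simpa using congrArg Fin.val h
      refine le_trans ?_ (hA2 _ _ h01)
      apply Finset.sum_nonneg; intro i _
      apply Finset.sum_nonneg; intro j _
      exact div_nonneg (sq_nonneg _) (mul_pos (hDbpos i) (hDbpos j)).le
    have hCknn : ∀ k, 0 ≤ Ck k := by
      intro k
      rw [hCk]
      apply Finset.sum_nonneg; intro s _
      apply Finset.sum_nonneg; intro t _
      exact div_nonneg (sq_nonneg _) (mul_pos (hDbpos s) (hDbpos t)).le
    set off : Fin N → ℝ := fun i => ∑ j ∈ univ.filter (fun j => ¬ c j = c i), W i j with hoffdef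
    have hoffnn : ∀ i, 0 ≤ off i := fun i => Finset.sum_nonneg fun j _ => hnn i j
    have hsplit : ∀ i, Dr i = Db i + off i := by
      intro i
      rw [hDr, hDb]
      exact (Finset.sum_filter_add_sum_filter_not univ (fun j => c j = c i) (W i)).symm
    have hDrDb : ∀ i, Db i ≤ Dr i := fun i => by rw [hsplit]; linarith [hoffnn i]
    have hDrpos : ∀ i, 0 < Dr i := fun i => lt_of_lt_of_le (hDbpos i) (hDrDb i)
    set ε : Fin N → ℝ := fun i => ν₂ * (Real.sqrt (Ck (c i)))⁻¹ with hεdef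
    have hεnn : ∀ i, 0 ≤ ε i := by
      intro i
      refine le_trans ?_ (hA3 i)
      exact mul_nonneg (inv_nonneg.mpr (hDbpos i).le) (hoffnn i)
    have hDrle : ∀ i, Dr i ≤ (1 + ε i) * Db i := by
      intro i
      have h := mul_le_mul_of_nonneg_left (hA3 i) (hDbpos i).le
      rw [← mul_assoc, mul_inv_cancel₀ (hDbpos i).ne', one_mul] at h
      have h' : off i ≤ Db i * ε i := h
      rw [hsplit i]
      nlinarith [h']
    have hCkpos : ∀ i, 0 < Ck (c i) := by
      intro i
      have hDb' : (0:ℝ) < ∑ j ∈ univ.filter (fun j => c j = c i), W i j := by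
        rw [← hDb]; exact hDbpos i
      obtain ⟨j, hj, hWj⟩ : ∃ j ∈ univ.filter (fun j => c j = c i), 0 < W i j := by
        by_contra h
        push_neg at h
        have hle : (∑ j ∈ univ.filter (fun j => c j = c i), W i j) ≤ 0 :=
          Finset.sum_nonpos h
        linarith
      have hcj : c j = c i := (Finset.mem_filter.mp hj).2
      rw [hCk]
      apply Finset.sum_pos'
      · intro s _
        apply Finset.sum_nonneg
        intro t _
        exact div_nonneg (sq_nonneg _) (mul_pos (hDbpos s) (hDbpos t)).le
      · refine ⟨i, Finset.mem_filter.mpr ⟨Finset.mem_univ _, rfl⟩, ?_⟩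
        apply Finset.sum_pos'
        · intro t _
          exact div_nonneg (sq_nonneg _) (mul_pos (hDbpos i) (hDbpos t)).le
        · exact ⟨j, Finset.mem_filter.mpr ⟨Finset.mem_univ _, hcj⟩,
            div_pos (pow_pos hWj 2) (mul_pos (hDbpos i) (hDbpos j))⟩
    have hεsq : ∀ i, ε i ^ 2 = ν₂ ^ 2 / Ck (c i) := by
      intro i
      have hs : (Real.sqrt (Ck (c i))) ^ 2 = Ck (c i) := Real.sq_sqrt (hCkpos i).le
      simp only [hεdef]
      rw [mul_pow, inv_pow, hs, ← div_eq_mul_inv]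
    set g : Fin N → Fin N → ℝ := fun i j =>
      (if c i = c j then ν₂ ^ 2 / Ck (c i) else 1) * (W i j ^ 2 / (Db i * Db j)) with hg
    have hpt : ∀ i j, (W i j / Real.sqrt (Dr i * Dr j) -
        (if c i = c j then W i j / Real.sqrt (Db i * Db j) else 0)) ^ 2 ≤ g i j := by
      intro i j
      by_cases hc : c i = c j
      · simp only [hg, if_pos hc]
        rw [← hεsq i]
        have hεj : ε i = ε j := by simp only [hεdef, hc]
        exact aux_within (Db i) (Db j) (Dr i) (Dr j) (ε i) (W i j)
          (hDbpos i) (hDbpos j) (hnn i j) (hεnn i) (hDrDb i) (hDrDb j)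
          (hDrle i) (hεj ▸ hDrle j)
      · simp only [hg, if_neg hc, one_mul]
        rw [sub_zero, div_pow, Real.sq_sqrt (mul_pos (hDrpos i) (hDrpos j)).le]
        have h1 : 0 < Db i * Db j := mul_pos (hDbpos i) (hDbpos j)
        have h2 : Db i * Db j ≤ Dr i * Dr j :=
          mul_le_mul (hDrDb i) (hDrDb j) (hDbpos j).le (hDrpos i).le
        gcongr
    have hperk : ∀ k : Fin K,
        (∑ l : Fin K, ∑ i ∈ univ.filter (fun i => c i = k),
          ∑ j ∈ univ.filter (fun j => c j = l), g i j) ≤ ν₂ ^ 2 + (K : ℝ) * ν₁ := by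
      intro k
      rw [← Finset.add_sum_erase _ _ (Finset.mem_univ k)]
      have hkk : (∑ i ∈ univ.filter (fun i => c i = k),
          ∑ j ∈ univ.filter (fun j => c j = k), g i j) ≤ ν₂ ^ 2 := by
        have heq : (∑ i ∈ univ.filter (fun i => c i = k),
            ∑ j ∈ univ.filter (fun j => c j = k), g i j)
            = (ν₂ ^ 2 / Ck k) * ∑ i ∈ univ.filter (fun i => c i = k),
              ∑ j ∈ univ.filter (fun j => c j = k), W i j ^ 2 / (Db i * Db j) := by
          rw [Finset.mul_sum]
          refine Finset.sum_congr rfl fun i hi => ?_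
          rw [Finset.mul_sum]
          refine Finset.sum_congr rfl fun j hj => ?_
          have hci : c i = k := (Finset.mem_filter.mp hi).2
          have hcj : c j = k := (Finset.mem_filter.mp hj).2
          simp only [hg]
          rw [if_pos (hci.trans hcj.symm), hci]
        rw [heq, ← hCk]
        rcases eq_or_lt_of_le (hCknn k) with h | h
        · rw [← h, mul_zero]
          exact sq_nonneg ν₂
        · rw [div_mul_cancel₀ _ h.ne']
      have hkl : ∀ l ∈ univ.erase k, (∑ i ∈ univ.filter (fun i => c i = k),
          ∑ j ∈ univ.filter (fun j => c j = l), g i j) ≤ ν₁ := by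
        intro l hl
        have hlk : l ≠ k := (Finset.mem_erase.mp hl).1
        refine le_trans (le_of_eq ?_) (hA2 k l hlk.symm)
        refine Finset.sum_congr rfl fun i hi => Finset.sum_congr rfl fun j hj => ?_
        have hci : c i = k := (Finset.mem_filter.mp hi).2
        have hcj : c j = l := (Finset.mem_filter.mp hj).2
        simp only [hg]
        rw [if_neg (by rw [hci, hcj]; exact hlk.symm), one_mul]
      have hsum_erase : (∑ l ∈ univ.erase k, ∑ i ∈ univ.filter (fun i => c i = k),
          ∑ j ∈ univ.filter (fun j => c j = l), g i j) ≤ (K : ℝ) * ν₁ := by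
        calc (∑ l ∈ univ.erase k, ∑ i ∈ univ.filter (fun i => c i = k),
            ∑ j ∈ univ.filter (fun j => c j = l), g i j)
            ≤ ∑ _l ∈ univ.erase k, ν₁ := Finset.sum_le_sum hkl
          _ = ((univ.erase k).card : ℝ) * ν₁ := by rw [Finset.sum_const, nsmul_eq_mul]
          _ ≤ (K : ℝ) * ν₁ := by
              apply mul_le_mul_of_nonneg_right _ hν₁
              have hcard : (univ.erase k).card ≤ K := by
                simpa using Finset.card_erase_le (s := (univ : Finset (Fin K))) (a := k)
              exact_mod_cast hcard
      linarith
    apply Real.sqrt_le_sqrt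
    calc (∑ i, ∑ j, (W i j / Real.sqrt (Dr i * Dr j) -
          (if c i = c j then W i j / Real.sqrt (Db i * Db j) else 0)) ^ 2)
        ≤ ∑ i, ∑ j, g i j :=
          Finset.sum_le_sum fun i _ => Finset.sum_le_sum fun j _ => hpt i j
      _ = ∑ k, ∑ i ∈ univ.filter (fun i => c i = k), ∑ j, g i j :=
          (Finset.sum_fiberwise univ c _).symm
      _ = ∑ k, ∑ i ∈ univ.filter (fun i => c i = k),
            ∑ l, ∑ j ∈ univ.filter (fun j => c j = l), g i j := by
          refine Finset.sum_congr rfl fun k _ => Finset.sum_congr rfl fun i _ => ?_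
          exact (Finset.sum_fiberwise univ c (g i)).symm
      _ = ∑ k, ∑ l, ∑ i ∈ univ.filter (fun i => c i = k),
            ∑ j ∈ univ.filter (fun j => c j = l), g i j :=
          Finset.sum_congr rfl fun k _ => Finset.sum_comm
      _ ≤ ∑ _k : Fin K, (ν₂ ^ 2 + (K : ℝ) * ν₁) :=
          Finset.sum_le_sum fun k _ => hperk k
      _ = (K : ℝ) * (ν₂ ^ 2 + (K : ℝ) * ν₁) := by
          rw [Finset.sum_const, Finset.card_univ, Fintype.card_fin, nsmul_eq_mul]
      _ ≤ (K : ℝ) ^ 2 * ν₁ + (K : ℝ) * ν₂ ^ 2 := le_of_eq (by ring)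
end
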